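/- For a ∈ ℝ⁶ with coordinates a_ij indexed by two-element subsets {i,j} of {1,2,3,4} (with a_ji = a_ij), write s_ij = sin a_ij and c_ij = cos a_ij, and for {i,j,k,h} = {1,2,3,4} define ψ_ij(a) = (s_ij² c_kh + c_ik c_jk + c_ih c_jh + c_ij c_ik c_jh + c_ij c_ih c_jk)/(√(2 c_ij c_ik c_ih + c_ij² + c_ik² + c_ih² − 1) · √(2 c_ij c_jk c_jh + c_ij² + c_jk² + c_jh² − 1)). Let B_I = {a ∈ ℝ⁶ : a_ij ≥ 0 for all pairs, and Σ_{j ≠ i} a_ij < π for each i ∈ {1,2,3,4}}. Then for every a ∈ B_I the quantities under both square roots are strictly positive, ψ_ij is continuous on B_I, and ψ_ij(a) = 1 whenever a ∈ B_I and a_ij = 0. -/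
import Mathlib

/-- The quantity `2 c_ij c_ik c_ih + c_ij² + c_ik² + c_ih² − 1` (with `c_rs = cos a_rs`)
under the square root attached to the vertex `i` of a generalized hyper-ideal
tetrahedron with dihedral angles `a`. -/
noncomputable def denV (a : Fin 4 → Fin 4 → ℝ) (i j k h : Fin 4) : ℝ :=
  2 * Real.cos (a i j) * Real.cos (a i k) * Real.cos (a i h) +
    Real.cos (a i j) ^ 2 + Real.cos (a i k) ^ 2 + Real.cos (a i h) ^ 2 - 1

/-- `ψ_ij(a) = (s_ij² c_kh + c_ik c_jk + c_ih c_jh + c_ij c_ik c_jh + c_ij c_ih c_jk)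
/ (√(2 c_ij c_ik c_ih + c_ij² + c_ik² + c_ih² − 1) √(2 c_ij c_jk c_jh + c_ij² + c_jk² + c_jh² − 1))`,
with `s_rs = sin a_rs`, `c_rs = cos a_rs` and `{i,j,k,h} = {1,2,3,4}`. -/
noncomputable def psiF (a : Fin 4 → Fin 4 → ℝ) (i j k h : Fin 4) : ℝ :=
  (Real.sin (a i j) ^ 2 * Real.cos (a k h) + Real.cos (a i k) * Real.cos (a j k) +
    Real.cos (a i h) * Real.cos (a j h) +
    Real.cos (a i j) * Real.cos (a i k) * Real.cos (a j h) +
    Real.cos (a i j) * Real.cos (a i h) * Real.cos (a j k)) /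
  (Real.sqrt (denV a i j k h) * Real.sqrt (denV a j i k h))

/-- `B_I`: (symmetric) angle vectors with all entries nonnegative and the angle sum at
each vertex strictly less than `π`. -/
noncomputable def BIset : Set (Fin 4 → Fin 4 → ℝ) :=
  {a | (∀ r s, a r s = a s r) ∧ (∀ r s, r ≠ s → 0 ≤ a r s) ∧
    ∀ i, ∑ j ∈ Finset.univ.erase i, a i j < Real.pi}

lemma cos_add_cos_pos' {x y : ℝ} (h1 : |x + y| < Real.pi) (h2 : |x - y| < Real.pi) :
    0 < Real.cos x + Real.cos y := by
  rw [Real.cos_add_cos]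
  have h1' := abs_lt.mp h1
  have h2' := abs_lt.mp h2
  have c1 : 0 < Real.cos ((x + y) / 2) :=
    Real.cos_pos_of_mem_Ioo ⟨by linarith [h1'.1], by linarith [h1'.2]⟩
  have c2 : 0 < Real.cos ((x - y) / 2) :=
    Real.cos_pos_of_mem_Ioo ⟨by linarith [h2'.1], by linarith [h2'.2]⟩
  positivity

lemma key_factor (α β γ : ℝ) :
    2 * Real.cos α * Real.cos β * Real.cos γ + Real.cos α ^ 2 + Real.cos β ^ 2 +
      Real.cos γ ^ 2 - 1
    = (Real.cos α + Real.cos (β + γ)) * (Real.cos α + Real.cos (β - γ)) := by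
  rw [Real.cos_add, Real.cos_sub]
  linear_combination (Real.sin γ ^ 2) * Real.sin_sq_add_cos_sq β +
    (1 - Real.cos β ^ 2) * Real.sin_sq_add_cos_sq γ

lemma den_pos {α β γ : ℝ} (ha : 0 ≤ α) (hb : 0 ≤ β) (hg : 0 ≤ γ)
    (hs : α + β + γ < Real.pi) :
    0 < 2 * Real.cos α * Real.cos β * Real.cos γ + Real.cos α ^ 2 + Real.cos β ^ 2 +
      Real.cos γ ^ 2 - 1 := by
  have hpi := Real.pi_pos
  rw [key_factor]
  refine mul_pos (cos_add_cos_pos' ?_ ?_) (cos_add_cos_pos' ?_ ?_) <;>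
    rw [abs_lt] <;> constructor <;> linarith

lemma erase_eq {i j k h : Fin 4} (hij : i ≠ j) (hik : i ≠ k) (hih : i ≠ h)
    (hjk : j ≠ k) (hjh : j ≠ h) (hkh : k ≠ h) :
    (Finset.univ.erase i : Finset (Fin 4)) = {j, k, h} := by
  symm
  apply Finset.eq_of_subset_of_card_le
  · intro x hx
    simp only [Finset.mem_insert, Finset.mem_singleton] at hx
    simp only [Finset.mem_erase, Finset.mem_univ, and_true]
    rcases hx with rfl | rfl | rfl
    · exact fun e => hij e.symm
    · exact fun e => hik e.symm
    · exact fun e => hih e.symm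
  · rw [Finset.card_erase_of_mem (Finset.mem_univ i)]
    rw [Finset.card_insert_of_notMem (by simp [hjk, hjh]),
      Finset.card_insert_of_notMem (by simp [hkh]), Finset.card_singleton]
    simp

lemma sum_three (a : Fin 4 → Fin 4 → ℝ) {i j k h : Fin 4} (hij : i ≠ j) (hik : i ≠ k)
    (hih : i ≠ h) (hjk : j ≠ k) (hjh : j ≠ h) (hkh : k ≠ h) :
    ∑ s ∈ Finset.univ.erase i, a i s = a i j + a i k + a i h := by
  rw [erase_eq hij hik hih hjk hjh hkh,
    Finset.sum_insert (by simp [hjk, hjh]),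
    Finset.sum_insert (by simp [hkh]), Finset.sum_singleton]
  ring

lemma denV_pos_of_mem {a : Fin 4 → Fin 4 → ℝ} (ha : a ∈ BIset) {i j k h : Fin 4}
    (hij : i ≠ j) (hik : i ≠ k) (hih : i ≠ h) (hjk : j ≠ k) (hjh : j ≠ h)
    (hkh : k ≠ h) : 0 < denV a i j k h := by
  obtain ⟨hsym, hpos, hsum⟩ := ha
  have hs := hsum i
  rw [sum_three a hij hik hih hjk hjh hkh] at hs
  exact den_pos (hpos i j hij) (hpos i k hik) (hpos i h hih) hs

theorem stmt18 :
    (∀ a ∈ BIset, ∀ i j k h : Fin 4, i ≠ j → i ≠ k → i ≠ h → j ≠ k → j ≠ h → k ≠ h →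
      0 < denV a i j k h ∧ 0 < denV a j i k h) ∧
    (∀ i j k h : Fin 4, i ≠ j → i ≠ k → i ≠ h → j ≠ k → j ≠ h → k ≠ h →
      ContinuousOn (fun a => psiF a i j k h) BIset) ∧
    (∀ a ∈ BIset, ∀ i j k h : Fin 4, i ≠ j → i ≠ k → i ≠ h → j ≠ k → j ≠ h → k ≠ h →
      a i j = 0 → psiF a i j k h = 1) := by
  refine ⟨?_, ?_, ?_⟩
  · intro a ha i j k h hij hik hih hjk hjh hkh
    exact ⟨denV_pos_of_mem ha hij hik hih hjk hjh hkh,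
      denV_pos_of_mem ha hij.symm hjk hjh hik hih hkh⟩
  · intro i j k h hij hik hih hjk hjh hkh
    have hc : ∀ r s : Fin 4, Continuous fun a : Fin 4 → Fin 4 → ℝ => a r s :=
      fun r s => (continuous_apply s).comp (continuous_apply r)
    have hnum : Continuous fun a : Fin 4 → Fin 4 → ℝ =>
        Real.sin (a i j) ^ 2 * Real.cos (a k h) + Real.cos (a i k) * Real.cos (a j k) +
          Real.cos (a i h) * Real.cos (a j h) +
          Real.cos (a i j) * Real.cos (a i k) * Real.cos (a j h) +
          Real.cos (a i j) * Real.cos (a i h) * Real.cos (a j k) := by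
      fun_prop
    have hdenc : ∀ i' j' k' h' : Fin 4,
        Continuous fun a : Fin 4 → Fin 4 → ℝ => Real.sqrt (denV a i' j' k' h') := by
      intro i' j' k' h'
      unfold denV
      fun_prop
    have hden : Continuous fun a : Fin 4 → Fin 4 → ℝ =>
        Real.sqrt (denV a i j k h) * Real.sqrt (denV a j i k h) :=
      (hdenc i j k h).mul (hdenc j i k h)
    apply ContinuousOn.div hnum.continuousOn hden.continuousOn
    intro a ha
    have h1 := denV_pos_of_mem ha hij hik hih hjk hjh hkh
    have h2 := denV_pos_of_mem ha hij.symm hjk hjh hik hih hkh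
    exact (mul_pos (Real.sqrt_pos.mpr h1) (Real.sqrt_pos.mpr h2)).ne'
  · intro a ha i j k h hij hik hih hjk hjh hkh h0
    obtain ⟨hsym, hpos, hsum⟩ := ha
    have hpi := Real.pi_pos
    have hji0 : a j i = 0 := (hsym j i).trans h0
    have hsi := hsum i; have hsj := hsum j
    rw [sum_three a hij hik hih hjk hjh hkh] at hsi
    rw [sum_three a hij.symm hjk hjh hik hih hkh] at hsj
    have hik0 := hpos i k hik
    have hih0 := hpos i h hih
    have hjk0 := hpos j k hjk
    have hjh0 := hpos j h hjh
    rw [h0] at hsi; rw [hji0] at hsj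
    have p1 : 0 < Real.cos (a i k) + Real.cos (a i h) := by
      apply cos_add_cos_pos' <;> rw [abs_lt] <;> constructor <;> linarith
    have p2 : 0 < Real.cos (a j k) + Real.cos (a j h) := by
      apply cos_add_cos_pos' <;> rw [abs_lt] <;> constructor <;> linarith
    have e1 : denV a i j k h = (Real.cos (a i k) + Real.cos (a i h)) ^ 2 := by
      unfold denV; rw [h0, Real.cos_zero]; ring
    have e2 : denV a j i k h = (Real.cos (a j k) + Real.cos (a j h)) ^ 2 := by
      unfold denV; rw [hji0, Real.cos_zero]; ring
    unfold psiF
    rw [e1, e2, Real.sqrt_sq p1.le, Real.sqrt_sq p2.le, h0, Real.sin_zero, Real.cos_zero]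
    rw [div_eq_one_iff_eq (mul_pos p1 p2).ne']
    ring
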